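/- Let n ≥ 1. If p* = (p*_1,…,p*_n) ∈ [0,1]^n is a global maximizer of the function p ↦ H(Z_p) on the cube [0,1]^n, then p*_1 = p*_2 = ⋯ = p*_n. Consequently, max over p ∈ [0,1]^n of H(Z_p) equals max over q ∈ [0,1] of H_n(q), the maximum over the diagonal p_1 = ⋯ = p_n = q. -/

import Mathlib

open Finset

/-- `b(k,p)`: the Poisson–binomial probability mass function. -/
noncomputable def pbin (n : ℕ) (p : Fin n → ℝ) (k : ℤ) : ℝ :=
  ∑ A ∈ Finset.univ.powerset.filter (fun A : Finset (Fin n) => (A.card : ℤ) = k),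
    (∏ i ∈ A, p i) * ∏ j ∈ Aᶜ, (1 - p j)

/-- Shannon entropy (base 2) of the Poisson–binomial distribution. -/
noncomputable def pbinEnt (n : ℕ) (p : Fin n → ℝ) : ℝ :=
  -∑ k ∈ Finset.range (n + 1), pbin n p k * Real.logb 2 (pbin n p k)

/-- `H_n(q)`: Shannon entropy of the binomial distribution `B(n,q)`. -/
noncomputable def binomEnt (n : ℕ) (q : ℝ) : ℝ :=
  -∑ k ∈ Finset.range (n + 1),
    ((n.choose k : ℝ) * q ^ k * (1 - q) ^ (n - k)) *
      Real.logb 2 ((n.choose k : ℝ) * q ^ k * (1 - q) ^ (n - k))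

/-!
Fix two coordinates `i ≠ j` and let `c` be the law of the number of successes among the other
coordinates; `c` is log-concave. With `s = p i + p j` held fixed, the law of `Z_p` is affine in
`t = p i * p j`, and summation by parts gives the derivative of the entropy in `t` as
`∑ k, c k * (2 log q (k+1) - log q k - log q (k+2))`, where `q` is the law of `Z_p`. The mixture `q`
is again log-concave (it is `c` convolved with two Bernoulli laws), so each term is nonnegative,
and the term at the first `k` with `c k > 0` is positive. Hence the entropy strictly increases as
`(p i, p j)` moves to `(s/2, s/2)`, and a maximizer cannot have `p i ≠ p j`.
-/

open Real

section PoissonBinomial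

variable {ι : Type*} [DecidableEq ι] (p : ι → ℝ)

noncomputable def pbinOn (s : Finset ι) (k : ℤ) : ℝ :=
  ∑ A ∈ s.powerset with (#A : ℤ) = k, (∏ i ∈ A, p i) * ∏ j ∈ s \ A, (1 - p j)

theorem pbin_eq_pbinOn (n : ℕ) (p : Fin n → ℝ) (k : ℤ) : pbin n p k = pbinOn p univ k := by
  simp only [pbin, pbinOn, compl_eq_univ_sdiff]

theorem pbinOn_empty : pbinOn p ∅ = fun k => if k = 0 then 1 else 0 := by
  ext k
  by_cases hk : k = 0 <;> simp [pbinOn, filter_singleton, hk, eq_comm]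

theorem pbinOn_insert {s : Finset ι} {i : ι} (hi : i ∉ s) (k : ℤ) :
    pbinOn p (insert i s) k = (1 - p i) * pbinOn p s k + p i * pbinOn p s (k - 1) := by
  simp only [pbinOn, sum_filter, sum_powerset_insert hi, mul_sum]
  congr 1 <;> refine sum_congr rfl fun A hA => ?_
  · have hiA : i ∉ A := fun h => hi (mem_powerset.1 hA h)
    rw [insert_sdiff_of_notMem _ hiA, prod_insert (by simp [hi])]
    split_ifs <;> ring
  · have hiA : i ∉ A := fun h => hi (mem_powerset.1 hA h)
    rw [insert_sdiff_insert, sdiff_insert_of_notMem hi, prod_insert hiA, card_insert_of_notMem hiA]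
    by_cases hk : (#A : ℤ) = k - 1
    · rw [if_pos (by omega), if_pos hk]; ring
    · rw [if_neg (by omega), if_neg hk, mul_zero]

variable {p}

theorem pbinOn_congr {p' : ι → ℝ} {s : Finset ι} (h : ∀ l ∈ s, p l = p' l) :
    pbinOn p s = pbinOn p' s := by
  ext k
  refine sum_congr rfl fun A hA => ?_
  have hAs := mem_powerset.1 (mem_filter.1 hA).1
  congr 1 <;> refine prod_congr rfl fun l hl => ?_
  · exact h l (hAs hl)
  · rw [h l (mem_sdiff.1 hl).1]

variable (p)

theorem pbinOn_eq_zero_of_neg (s : Finset ι) {k : ℤ} (hk : k < 0) : pbinOn p s k = 0 :=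
  sum_eq_zero fun A hA => by have := (mem_filter.1 hA).2; omega

theorem pbinOn_eq_zero_of_card_lt (s : Finset ι) {k : ℤ} (hk : #s < k) : pbinOn p s k = 0 :=
  sum_eq_zero fun A hA => by
    have := card_le_card (mem_powerset.1 (mem_filter.1 hA).1)
    have := (mem_filter.1 hA).2
    omega

theorem sum_pbinOn (s : Finset ι) : ∑ k ∈ range (#s + 1), pbinOn p s k = 1 := by
  have hfib := sum_fiberwise_of_maps_to (g := card) (t := range (#s + 1))
    (fun A hA => mem_range.2 (Nat.lt_succ_of_le (card_le_card (mem_powerset.1 hA))))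
    (fun A => (∏ i ∈ A, p i) * ∏ j ∈ s \ A, (1 - p j))
  rw [← prod_add, prod_congr rfl fun _ _ => add_sub_cancel _ _, prod_const_one] at hfib
  simpa only [pbinOn, Nat.cast_inj] using hfib

end PoissonBinomial

-- Asking `a ≤ b` rather than only `a = b` rules out internal zeros; this stronger form is what
-- convolution with a Bernoulli law preserves.
structure IsLogConcave (c : ℤ → ℝ) : Prop where
  nonneg : ∀ k, 0 ≤ c k
  mul_le : ∀ {a b : ℤ}, a ≤ b → c (a - 1) * c (b + 1) ≤ c a * c b

namespace IsLogConcave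

variable {c : ℤ → ℝ}

theorem mul_le_sq (hc : IsLogConcave c) (k : ℤ) : c k * c (k + 2) ≤ c (k + 1) ^ 2 := by
  simpa [sq, add_assoc, one_add_one_eq_two] using hc.mul_le (le_refl (k + 1))

theorem mul_le_of_le (hc : IsLogConcave c) {a b : ℤ} (hab : a ≤ b) :
    c (a - 2) * c (b + 1) ≤ c a * c (b - 1) := by
  have h₁ : c (a - 2) * c (b + 1) ≤ c (a - 1) * c b := by
    simpa [sub_sub, one_add_one_eq_two] using hc.mul_le (show a - 1 ≤ b by omega)
  have h₂ : c (a - 1) * c b ≤ c a * c (b - 1) := by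
    rcases hab.eq_or_lt with rfl | hlt
    · rw [mul_comm]
    · simpa using hc.mul_le (show a ≤ b - 1 by omega)
  exact h₁.trans h₂

theorem convBernoulli (hc : IsLogConcave c) {x : ℝ} (hx : x ∈ Set.Icc (0 : ℝ) 1) :
    IsLogConcave fun k => (1 - x) * c k + x * c (k - 1) where
  nonneg k := by
    have := hc.nonneg k; have := hc.nonneg (k - 1); have := hx.1; have := hx.2
    positivity
  mul_le {a b} hab := by
    have h₁ := mul_le_mul_of_nonneg_left (hc.mul_le hab) (sq_nonneg (1 - x))
    have h₂ := mul_le_mul_of_nonneg_left (hc.mul_le_of_le hab)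
      (mul_nonneg hx.1 (sub_nonneg.2 hx.2))
    have h₃ := mul_le_mul_of_nonneg_left (hc.mul_le (show a - 1 ≤ b - 1 by omega)) (sq_nonneg x)
    simp only [sub_sub, add_sub_cancel_right, sub_add_cancel, one_add_one_eq_two]
      at h₁ h₂ h₃ ⊢
    linarith

end IsLogConcave

theorem isLogConcave_indicator_zero :
    IsLogConcave fun k : ℤ => if k = 0 then (1 : ℝ) else 0 where
  nonneg k := by positivity
  mul_le {a b} hab := by
    split_ifs <;> first | omega | norm_num

theorem isLogConcave_pbinOn {ι : Type*} [DecidableEq ι] {p : ι → ℝ} {s : Finset ι}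
    (hp : ∀ l ∈ s, p l ∈ Set.Icc (0 : ℝ) 1) : IsLogConcave (pbinOn p s) := by
  induction s using Finset.induction_on with
  | empty => simpa only [pbinOn_empty] using isLogConcave_indicator_zero
  | insert i s hi ih =>
    rw [funext (pbinOn_insert p hi)]
    exact (ih fun l hl => hp l (mem_insert_of_mem hl)).convBernoulli (hp i (mem_insert_self i s))

-- The law of `K + X + Y` for `K ∼ c` and independent Bernoulli variables `X, Y` with
-- `P(X) + P(Y) = s` and `P(X) P(Y) = t`: once `s` is fixed it is affine in `t`.
noncomputable def pairMix (c : ℤ → ℝ) (s t : ℝ) (k : ℤ) : ℝ :=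
  (1 - s + t) * c k + (s - 2 * t) * c (k - 1) + t * c (k - 2)

theorem pairMix_add_mul (c : ℤ → ℝ) (x y : ℝ) :
    pairMix c (x + y) (x * y) = fun k =>
      (1 - y) * ((1 - x) * c k + x * c (k - 1)) +
        y * ((1 - x) * c (k - 1) + x * c (k - 1 - 1)) := by
  ext k
  simp only [pairMix, sub_sub, one_add_one_eq_two]
  ring

theorem exists_mem_Icc_add_eq_mul_eq {s t : ℝ} (hs₀ : 0 ≤ s) (hs₂ : s ≤ 2) (ht₀ : 0 ≤ t)
    (ht₁ : s - 1 ≤ t) (ht : t ≤ s ^ 2 / 4) :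
    ∃ x ∈ Set.Icc (0 : ℝ) 1, ∃ y ∈ Set.Icc (0 : ℝ) 1, x + y = s ∧ x * y = t := by
  set u := √(s ^ 2 / 4 - t)
  have hu₀ : 0 ≤ u := sqrt_nonneg _
  have hu : u ^ 2 = s ^ 2 / 4 - t := sq_sqrt (by linarith)
  refine ⟨s / 2 + u, ⟨by positivity, by nlinarith⟩, s / 2 - u, ⟨by nlinarith, by linarith⟩,
    by ring, by linear_combination -hu⟩

theorem IsLogConcave.pairMix {c : ℤ → ℝ} (hc : IsLogConcave c) {s t : ℝ} (hs₀ : 0 ≤ s)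
    (hs₂ : s ≤ 2) (ht₀ : 0 ≤ t) (ht₁ : s - 1 ≤ t) (ht : t ≤ s ^ 2 / 4) :
    IsLogConcave (pairMix c s t) := by
  obtain ⟨x, hx, y, hy, rfl, rfl⟩ := exists_mem_Icc_add_eq_mul_eq hs₀ hs₂ ht₀ ht₁ ht
  rw [pairMix_add_mul]
  exact (hc.convBernoulli hx).convBernoulli hy

theorem pbin_update_update {n : ℕ} (p : Fin n → ℝ) {i j : Fin n} (hij : i ≠ j) (x y : ℝ) :
    pbin n (Function.update (Function.update p i x) j y) =
      pairMix (pbinOn p (univ \ {i, j})) (x + y) (x * y) := by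
  set s := univ \ {i, j}
  set p' := Function.update (Function.update p i x) j y
  have hjs : j ∉ s := by simp [s]
  have his : i ∉ insert j s := by simp [s, hij]
  have huniv : univ = insert i (insert j s) := by
    ext l
    by_cases hli : l = i <;> by_cases hlj : l = j <;> simp [s, hli, hlj]
  have hp' : pbinOn p' s = pbinOn p s :=
    pbinOn_congr fun l hl => by
      have : l ≠ i ∧ l ≠ j := by simpa [s, not_or] using hl
      simp [p', this.1, this.2]
  ext k
  rw [pbin_eq_pbinOn, huniv, pbinOn_insert p' his, pbinOn_insert p' hjs, pbinOn_insert p' hjs,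
    hp', show p' i = x by simp [p', hij], show p' j = y by simp [p']]
  simp only [pairMix, sub_sub, one_add_one_eq_two]
  ring

theorem pbinEnt_eq_sum_negMulLog (n : ℕ) (p : Fin n → ℝ) :
    pbinEnt n p = (∑ k ∈ range (n + 1), negMulLog (pbin n p k)) / log 2 := by
  simp only [pbinEnt, negMulLog, logb, sum_div, ← sum_neg_distrib]
  exact sum_congr rfl fun _ _ => by ring

noncomputable def pairEnt (n : ℕ) (c : ℤ → ℝ) (s t : ℝ) : ℝ :=
  ∑ k ∈ range (n + 1), negMulLog (pairMix c s t k)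

theorem pbinEnt_update_update {n : ℕ} (p : Fin n → ℝ) {i j : Fin n} (hij : i ≠ j) (x y : ℝ) :
    pbinEnt n (Function.update (Function.update p i x) j y) =
      pairEnt n (pbinOn p (univ \ {i, j})) (x + y) (x * y) / log 2 := by
  rw [pbinEnt_eq_sum_negMulLog, pbin_update_update p hij, pairEnt]

theorem hasDerivAt_negMulLog_affine {a b t : ℝ} (h : a * t + b = 0 → a = 0) :
    HasDerivAt (fun u => negMulLog (a * u + b)) (-(a * (log (a * t + b) + 1))) t := by
  by_cases ha : a = 0
  · simpa [ha] using hasDerivAt_const t (negMulLog b)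
  · have hlin : HasDerivAt (fun u => a * u + b) a t := by
      simpa using ((hasDerivAt_id t).const_mul a).add_const b
    refine ((hasDerivAt_negMulLog (mt h ha)).comp t hlin).congr_deriv ?_
    ring

theorem sum_range_mul_shift (c f : ℤ → ℝ) (N : ℕ) (h₀ : c (-1) = 0) (hN : c N = 0) :
    ∑ k ∈ range (N + 1), c (k - 1) * f k = ∑ k ∈ range (N + 1), c k * f (k + 1) := by
  rw [sum_range_succ', sum_range_succ]
  simp [h₀, hN]

theorem sum_range_secondDiff_mul (c f : ℤ → ℝ) (n : ℕ) (h₁ : c (-1) = 0) (h₂ : c (-2) = 0)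
    (hn₁ : c (n - 1) = 0) (hn : c n = 0) :
    ∑ k ∈ range (n + 1), (c k - 2 * c (k - 1) + c (k - 2)) * f k =
      ∑ k ∈ range (n + 1), c k * (f k - 2 * f (k + 1) + f (k + 2)) := by
  have hshift₁ := sum_range_mul_shift c f n h₁ hn
  have hshift₂ :
      ∑ k ∈ range (n + 1), c (k - 2) * f k = ∑ k ∈ range (n + 1), c k * f (k + 2) :=
    calc ∑ k ∈ range (n + 1), c (k - 2) * f k
        = ∑ k ∈ range (n + 1), c (k - 1 - 1) * f k := by simp only [sub_sub, one_add_one_eq_two]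
      _ = ∑ k ∈ range (n + 1), c (k - 1) * f (k + 1) :=
        sum_range_mul_shift (fun m => c (m - 1)) f n (by simpa using h₂) hn₁
      _ = ∑ k ∈ range (n + 1), c k * f (k + 1 + 1) :=
        sum_range_mul_shift c (fun m => f (m + 1)) n h₁ hn
      _ = ∑ k ∈ range (n + 1), c k * f (k + 2) := by simp only [add_assoc, one_add_one_eq_two]
  simp only [add_mul, sub_mul, mul_add, mul_sub, sum_add_distrib, sum_sub_distrib, mul_assoc,
    ← mul_sum, hshift₁, hshift₂, mul_left_comm (c _) 2]

theorem continuous_pairEnt (n : ℕ) (c : ℤ → ℝ) (s : ℝ) : Continuous (pairEnt n c s) := by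
  unfold pairEnt pairMix
  fun_prop

theorem hasDerivAt_pairEnt (n : ℕ) {c : ℤ → ℝ} (hc : ∀ k, 0 ≤ c k) {s t : ℝ}
    (hA : 0 < 1 - s + t) (hB : 0 < s - 2 * t) (ht : 0 < t) :
    HasDerivAt (pairEnt n c s)
      (-∑ k ∈ range (n + 1), (c k - 2 * c (k - 1) + c (k - 2)) * (log (pairMix c s t k) + 1))
      t := by
  rw [← sum_neg_distrib]
  refine HasDerivAt.fun_sum fun k _ => ?_
  have haff : ∀ u, pairMix c s u k =
      (c k - 2 * c (k - 1) + c (k - 2)) * u + ((1 - s) * c k + s * c (k - 1)) := fun u => by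
    simp only [pairMix]; ring
  simp only [haff]
  refine hasDerivAt_negMulLog_affine fun h => ?_
  have h₀ := mul_nonneg hA.le (hc k)
  have h₁ := mul_nonneg hB.le (hc (k - 1))
  have h₂ := mul_nonneg ht.le (hc (k - 2))
  have : c k = 0 ∧ c (k - 1) = 0 ∧ c (k - 2) = 0 := by
    refine ⟨?_, ?_, ?_⟩ <;> nlinarith
  simp [this]

theorem log_add_log_le_two_mul_log {a b m : ℝ} (ha : 0 < a) (hb : 0 < b) (h : a * b ≤ m ^ 2) :
    log a + log b ≤ 2 * log m := by
  calc log a + log b = log (a * b) := (log_mul ha.ne' hb.ne').symm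
    _ ≤ log (m ^ 2) := log_le_log (mul_pos ha hb) h
    _ = 2 * log m := by simp [log_pow]

theorem log_add_log_lt_two_mul_log {a b m : ℝ} (ha : 0 < a) (hb : 0 < b) (h : a * b < m ^ 2) :
    log a + log b < 2 * log m := by
  calc log a + log b = log (a * b) := (log_mul ha.ne' hb.ne').symm
    _ < log (m ^ 2) := log_lt_log (mul_pos ha hb) h
    _ = 2 * log m := by simp [log_pow]

section PairMix

variable {c : ℤ → ℝ} {s t : ℝ}

theorem pairMix_pos_of_pos (hc : ∀ k, 0 ≤ c k) (hA : 0 < 1 - s + t) (hB : 0 < s - 2 * t)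
    (ht : 0 < t) {k : ℤ} (hk : 0 < c k) : 0 < pairMix c s t k ∧ 0 < pairMix c s t (k + 2) := by
  have := hc (k - 1); have := hc (k - 2); have := hc (k + 2); have := hc (k + 1)
  simp only [pairMix, add_sub_cancel_right, show k + 2 - 1 = k + 1 by ring]
  constructor <;> positivity

theorem pairMix_mul_lt_sq (hc : IsLogConcave c) (hA : 0 < 1 - s + t) (hB : 0 < s - 2 * t)
    (ht : 0 < t) (hst : t ≤ s ^ 2 / 4) {k : ℤ} (hk : 0 < c k) (hk₁ : c (k - 1) = 0)
    (hk₂ : c (k - 2) = 0) :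
    pairMix c s t k * pairMix c s t (k + 2) < pairMix c s t (k + 1) ^ 2 := by
  simp only [pairMix, add_sub_cancel_right, show k + 2 - 1 = k + 1 by ring,
    show k + 1 - 2 = k - 1 by ring, hk₁, hk₂]
  nlinarith [mul_le_mul_of_nonneg_left (hc.mul_le_sq k) (sq_nonneg (1 - s + t)),
    mul_nonneg (mul_nonneg hA.le hB.le) (mul_nonneg hk.le (hc.nonneg (k + 1))),
    mul_pos (mul_pos ht hA) (mul_pos hk hk),
    mul_nonneg (show 0 ≤ s ^ 2 - 4 * t by linarith) (mul_nonneg hk.le hk.le)]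

end PairMix

theorem strictMonoOn_pairEnt {n : ℕ} {c : ℤ → ℝ} (hc : IsLogConcave c)
    (hneg : ∀ k < 0, c k = 0) (htop : ∀ k, (n : ℤ) < k + 2 → c k = 0) (hne : ∃ k, c k ≠ 0)
    {s : ℝ} (hs₀ : 0 ≤ s) (hs₂ : s ≤ 2) :
    StrictMonoOn (pairEnt n c s) (Set.Icc (max 0 (s - 1)) (s ^ 2 / 4)) := by
  obtain ⟨k₀, hk₀, hmin⟩ :=
    Int.exists_least_of_bdd ⟨0, fun k hk => not_lt.1 (mt (hneg k) hk)⟩ hne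
  have hk₀pos : 0 < c k₀ := (hc.nonneg k₀).lt_of_ne' hk₀
  have hbelow : ∀ m < k₀, c m = 0 := fun m hm => by_contra fun h => (hmin m h).not_gt hm
  have hk₀n : k₀ + 2 ≤ n := by by_contra h; exact hk₀ (htop k₀ (by omega))
  lift k₀ to ℕ using not_lt.1 (mt (hneg k₀) hk₀)
  refine strictMonoOn_of_deriv_pos (convex_Icc _ _) (continuous_pairEnt n c s).continuousOn
    fun t ht => ?_
  rw [interior_Icc, Set.mem_Ioo, max_lt_iff] at ht
  obtain ⟨⟨ht₀, ht₁⟩, hts⟩ := ht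
  have hA : 0 < 1 - s + t := by linarith
  have hB : 0 < s - 2 * t := by nlinarith
  have hq := hc.pairMix hs₀ hs₂ ht₀.le ht₁.le hts.le
  have hparts := sum_range_secondDiff_mul c (fun k => log (pairMix c s t k) + 1) n
    (hneg _ (by norm_num)) (hneg _ (by norm_num)) (htop _ (by omega)) (htop _ (by omega))
  rw [(hasDerivAt_pairEnt n hc.nonneg hA hB ht₀).deriv, hparts, ← sum_neg_distrib]
  refine sum_pos' (fun k _ => ?_) ⟨k₀, mem_range.2 (by omega), ?_⟩
  · rcases (hc.nonneg k).eq_or_lt with hk | hk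
    · simp [← hk]
    · obtain ⟨h₀, h₂⟩ := pairMix_pos_of_pos hc.nonneg hA hB ht₀ hk
      have hlog := log_add_log_le_two_mul_log h₀ h₂ (hq.mul_le_sq k)
      nlinarith
  · obtain ⟨h₀, h₂⟩ := pairMix_pos_of_pos hc.nonneg hA hB ht₀ hk₀pos
    have hlog := log_add_log_lt_two_mul_log h₀ h₂
      (pairMix_mul_lt_sq hc hA hB ht₀ hts.le hk₀pos (hbelow _ (by omega)) (hbelow _ (by omega)))
    nlinarith

theorem pbinEnt_lt_pbinEnt_update_average {n : ℕ} {p : Fin n → ℝ}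
    (hp : ∀ l, p l ∈ Set.Icc (0 : ℝ) 1) {i j : Fin n} (hij : p i ≠ p j) :
    pbinEnt n p <
      pbinEnt n (Function.update (Function.update p i ((p i + p j) / 2)) j ((p i + p j) / 2)) := by
  have hij' : i ≠ j := fun h => hij (congrArg p h)
  obtain ⟨⟨hi₀, hi₁⟩, ⟨hj₀, hj₁⟩⟩ := And.intro (hp i) (hp j)
  have hcard : #(univ \ {i, j}) + 2 = n := by
    rw [← card_pair hij', card_sdiff_add_card_eq_card (subset_univ _), card_univ, Fintype.card_fin]
  have hne : ∃ k, pbinOn p (univ \ {i, j}) k ≠ 0 := by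
    by_contra! h
    simpa [h] using sum_pbinOn p (univ \ {i, j})
  have hmono := strictMonoOn_pairEnt (n := n) (s := p i + p j)
    (isLogConcave_pbinOn fun l _ => hp l) (fun k hk => pbinOn_eq_zero_of_neg p _ hk)
    (fun k hk => pbinOn_eq_zero_of_card_lt p _ (by omega)) hne (by linarith) (by linarith)
  have hlow : max 0 (p i + p j - 1) ≤ p i * p j :=
    max_le (mul_nonneg hi₀ hj₀) (by nlinarith [mul_nonneg (sub_nonneg.2 hi₁) (sub_nonneg.2 hj₁)])
  have hlt : p i * p j < (p i + p j) ^ 2 / 4 := by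
    nlinarith [sq_pos_of_ne_zero (sub_ne_zero.2 hij)]
  calc pbinEnt n p = pairEnt n (pbinOn p (univ \ {i, j})) (p i + p j) (p i * p j) / log 2 := by
        simpa using pbinEnt_update_update p hij' (p i) (p j)
    _ < pairEnt n (pbinOn p (univ \ {i, j})) (p i + p j) ((p i + p j) ^ 2 / 4) / log 2 :=
        div_lt_div_of_pos_right (hmono ⟨hlow, hlt.le⟩ ⟨hlow.trans hlt.le, le_rfl⟩ hlt)
          (log_pos one_lt_two)
    _ = _ := by
        rw [pbinEnt_update_update p hij', add_halves]
        ring_nf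

theorem pbin_const (n : ℕ) (q : ℝ) (k : ℕ) :
    pbin n (fun _ => q) k = (n.choose k : ℝ) * q ^ k * (1 - q) ^ (n - k) := by
  rw [pbin, sum_congr (s₂ := powersetCard k univ) (by ext A; simp)
    fun A hA => by rw [prod_const, prod_const, card_compl, (mem_powersetCard.1 hA).2]]
  simp [card_powersetCard, mul_assoc]

theorem pbinEnt_const (n : ℕ) (q : ℝ) : pbinEnt n (fun _ => q) = binomEnt n q := by
  simp only [pbinEnt, binomEnt, pbin_const]

/-- Any global maximizer of the entropy `H(Z_p)` on the cube `[0,1]^n` has all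
coordinates equal; consequently the maximum of `H(Z_p)` over the cube equals
the maximum of `H_n(q)` over the diagonal `p₁ = ⋯ = pₙ = q`. -/
theorem maximizer_has_equal_coords (n : ℕ) (hn : 1 ≤ n) (pstar : Fin n → ℝ)
    (hps : ∀ i, pstar i ∈ Set.Icc (0 : ℝ) 1)
    (hmax : ∀ p : Fin n → ℝ, (∀ i, p i ∈ Set.Icc (0 : ℝ) 1) →
      pbinEnt n p ≤ pbinEnt n pstar) :
    (∀ i j, pstar i = pstar j) ∧
      (∀ q ∈ Set.Icc (0 : ℝ) 1, binomEnt n q ≤ pbinEnt n pstar) ∧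
      pbinEnt n pstar = binomEnt n (pstar ⟨0, hn⟩) := by
  have hconst : ∀ i j, pstar i = pstar j := by
    by_contra! ⟨i, j, hij⟩
    have hmid : (pstar i + pstar j) / 2 ∈ Set.Icc (0 : ℝ) 1 :=
      ⟨by linarith [(hps i).1, (hps j).1], by linarith [(hps i).2, (hps j).2]⟩
    refine (hmax _ fun l => ?_).not_gt (pbinEnt_lt_pbinEnt_update_average hps hij)
    simp only [Function.update_apply]
    split_ifs <;> first | exact hmid | exact hps l
  refine ⟨hconst, fun q hq => pbinEnt_const n q ▸ hmax _ fun _ => hq, ?_⟩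
  rw [← pbinEnt_const]
  exact congrArg (pbinEnt n) (funext fun i => hconst i _)
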